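/- arXiv:math/0602613 — 6 statements merged into one kernel-verified Lean document; each statement's English description precedes it below -/
import Mathlib

section
/- For all complex a, b, p, q and every natural number n, the (p,q)-binomial theorem holds: ((a,b);(p,q))_n = Σ_{k=0}^{n} [n choose k]_{p,q} (-1)^k p^{(n-k)(n-k-1)/2} q^{k(k-1)/2} a^{n-k} b^k, where [n choose k]_{p,q} is the (p,q)-binomial coefficient. -/
/-- The `(p,q)`-binomial coefficient, defined polynomially via the Pascal-type
recursion `[n+1, k+1] = p^(n-k) [n, k] + q^(k+1) [n, k+1]`, which agrees with
`((p,q);(p,q))ₙ / (((p,q);(p,q))ₖ ((p,q);(p,q))_{n-k})` for generic `p`, `q`. -/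
def pqBinom (p q : ℂ) : ℕ → ℕ → ℂ
  | _, 0 => 1
  | 0, _ + 1 => 0
  | n + 1, k + 1 => p ^ (n - k) * pqBinom p q n k + q ^ (k + 1) * pqBinom p q n (k + 1)

/-- The `(p,q)`-shifted factorial `((a,b);(p,q))ₙ = ∏_{j=0}^{n-1} (a pʲ - b qʲ)`. -/
def pqPoch (a b p q : ℂ) (n : ℕ) : ℂ := ∏ j ∈ Finset.range n, (a * p ^ j - b * q ^ j)

lemma pqBinom_zero_of_lt (p q : ℂ) : ∀ {n k : ℕ}, n < k → pqBinom p q n k = 0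
  | 0, _+1, _ => by simp [pqBinom]
  | n+1, k+1, h => by
    rw [pqBinom, pqBinom_zero_of_lt p q (by omega), pqBinom_zero_of_lt p q (by omega)]
    ring

lemma tri (m : ℕ) : (m+1)*m/2 = m*(m-1)/2 + m := by
  have h1 : (m+1).choose 2 = (m+1)*m/2 := by rw [Nat.choose_two_right]; simp
  have h2 : m.choose 2 = m*(m-1)/2 := Nat.choose_two_right m
  have h3 : (m+1).choose 2 = m.choose 1 + m.choose 2 := Nat.choose_succ_succ m 1
  simp [Nat.choose_one_right] at h3
  omega

lemma pqPoch_succ (a b p q : ℂ) (n : ℕ) :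
    pqPoch a b p q (n+1) = (a - b) * pqPoch (a*p) (b*q) p q n := by
  rw [pqPoch, Finset.prod_range_succ', pqPoch]
  simp only [pow_zero, mul_one, pow_succ']
  rw [mul_comm]
  congr 1
  apply Finset.prod_congr rfl
  intro i _
  ring

theorem pq_binomial_theorem (a b p q : ℂ) (n : ℕ) :
    pqPoch a b p q n =
      ∑ k ∈ Finset.range (n + 1),
        pqBinom p q n k * (-1) ^ k * p ^ ((n - k) * (n - k - 1) / 2) *
          q ^ (k * (k - 1) / 2) * a ^ (n - k) * b ^ k := by
  induction n generalizing a b with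
  | zero => simp [pqPoch, pqBinom]
  | succ n ih =>
    rw [pqPoch_succ, ih, Finset.mul_sum]
    rw [Finset.sum_range_succ' (fun k => pqBinom p q (n+1) k * (-1) ^ k *
      p ^ ((n+1 - k) * (n+1 - k - 1) / 2) * q ^ (k * (k - 1) / 2) * a ^ (n+1 - k) * b ^ k) (n+1)]
    have hB : ∀ k, pqBinom p q (n+1) (k+1)
        = p^(n-k)*pqBinom p q n k + q^(k+1)*pqBinom p q n (k+1) := fun k => rfl
    have step1 : ∀ k ∈ Finset.range (n+1),
        pqBinom p q (n+1) (k+1) * (-1) ^ (k+1) *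
          p ^ ((n+1 - (k+1)) * (n+1 - (k+1) - 1) / 2) * q ^ ((k+1) * (k+1 - 1) / 2) *
          a ^ (n+1 - (k+1)) * b ^ (k+1)
        = (p^(n-k)*pqBinom p q n k) * (-1) ^ (k+1) *
            p ^ ((n - k) * (n - k - 1) / 2) * q ^ ((k+1) * k / 2) * a ^ (n-k) * b ^ (k+1)
          + (q^(k+1)*pqBinom p q n (k+1)) * (-1) ^ (k+1) *
            p ^ ((n - k) * (n - k - 1) / 2) * q ^ ((k+1) * k / 2) * a ^ (n-k) * b ^ (k+1) := by
      intro k hk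
      rw [hB]
      have e1 : n + 1 - (k+1) = n - k := by omega
      rw [e1, Nat.add_sub_cancel]
      ring
    rw [Finset.sum_congr rfl step1, Finset.sum_add_distrib, add_assoc]
    have step2 : (∑ k ∈ Finset.range (n+1),
          (q^(k+1)*pqBinom p q n (k+1)) * (-1) ^ (k+1) *
            p ^ ((n - k) * (n - k - 1) / 2) * q ^ ((k+1) * k / 2) * a ^ (n-k) * b ^ (k+1))
        + pqBinom p q (n+1) 0 * (-1) ^ 0 * p ^ ((n+1 - 0) * (n+1 - 0 - 1) / 2) *
            q ^ (0 * (0 - 1) / 2) * a ^ (n+1 - 0) * b ^ 0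
        = ∑ k ∈ Finset.range (n+1),
            (q^k * pqBinom p q n k) * (-1) ^ k *
              p ^ ((n + 1 - k) * (n + 1 - k - 1) / 2) * q ^ (k * (k - 1) / 2) *
              a ^ (n+1-k) * b ^ k := by
      set f : ℕ → ℂ := fun k => (q^k * pqBinom p q n k) * (-1) ^ k *
              p ^ ((n + 1 - k) * (n + 1 - k - 1) / 2) * q ^ (k * (k - 1) / 2) *
              a ^ (n+1-k) * b ^ k with hf
      have h1 : ∀ k ∈ Finset.range (n+1),
          (q^(k+1)*pqBinom p q n (k+1)) * (-1) ^ (k+1) *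
            p ^ ((n - k) * (n - k - 1) / 2) * q ^ ((k+1) * k / 2) * a ^ (n-k) * b ^ (k+1)
          = f (k+1) := by
        intro k hk
        rw [hf]
        have e1 : n + 1 - (k+1) = n - k := by omega
        simp only [e1, Nat.add_sub_cancel]
      have h2 : pqBinom p q (n+1) 0 * (-1) ^ 0 * p ^ ((n+1 - 0) * (n+1 - 0 - 1) / 2) *
            q ^ (0 * (0 - 1) / 2) * a ^ (n+1 - 0) * b ^ 0 = f 0 := by
        simp [hf, pqBinom]
      rw [Finset.sum_congr rfl h1, h2, ← Finset.sum_range_succ' f (n+1),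
        Finset.sum_range_succ f (n+1)]
      have : f (n+1) = 0 := by
        simp [hf, pqBinom_zero_of_lt p q (Nat.lt_succ_self n)]
      rw [this, add_zero]
    rw [step2, ← Finset.sum_add_distrib]
    apply Finset.sum_congr rfl
    intro k hk
    have hkn : k ≤ n := by simpa [Nat.lt_succ_iff] using hk
    have e1 : n - k + 1 = n + 1 - k := by omega
    have e2 : n + 1 - k - 1 = n - k := by omega
    rw [← e1]; simp only [Nat.add_sub_cancel]
    rw [tri (n-k), tri k]
    rw [pow_add, pow_add, pow_succ, mul_pow, mul_pow]
    ring
end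

section
/- If x, y, a, b are elements of an associative algebra such that xy = q yx, ab = p^{-1} ba, a and b each commute with x and y, and p, q are invertible central scalars, then (ax + by)^n = Σ_{k=0}^{n} [n choose k]_{p,q} a^{n-k} b^k y^k x^{n-k} for every natural number n. -/
/-- `((p,q);(p,q))ₘ = ∏_{j=1}^{m} (pʲ - qʲ)`. -/
def pqFact (p q : ℂ) (m : ℕ) : ℂ := ∏ j ∈ Finset.range m, (p ^ (j + 1) - q ^ (j + 1))

/-- The `(p,q)`-binomial coefficient as a ratio of `(p,q)`-factorials. -/
noncomputable def pqBinomCoef (p q : ℂ) (n k : ℕ) : ℂ :=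
  pqFact p q n / (pqFact p q k * pqFact p q (n - k))

lemma pqFact_succ (p q : ℂ) (m : ℕ) :
    pqFact p q (m + 1) = pqFact p q m * (p ^ (m + 1) - q ^ (m + 1)) :=
  Finset.prod_range_succ _ _

lemma pqFact_zero (p q : ℂ) : pqFact p q 0 = 1 := by simp [pqFact]

lemma pqFact_ne_zero (p q : ℂ) (m : ℕ) (h : ∀ j, 1 ≤ j → j ≤ m → p ^ j ≠ q ^ j) :
    pqFact p q m ≠ 0 := by
  rw [pqFact, Finset.prod_ne_zero_iff]
  intro j hj
  have hj' : j < m := Finset.mem_range.mp hj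
  exact sub_ne_zero.mpr (h (j + 1) (by omega) (by omega))

lemma pqBinom_zero (p q : ℂ) (n : ℕ) (h : pqFact p q n ≠ 0) : pqBinomCoef p q n 0 = 1 := by
  rw [pqBinomCoef, Nat.sub_zero, pqFact_zero, one_mul, div_self h]

lemma pqBinom_self (p q : ℂ) (n : ℕ) (h : pqFact p q n ≠ 0) : pqBinomCoef p q n n = 1 := by
  rw [pqBinomCoef, Nat.sub_self, pqFact_zero, mul_one, div_self h]

lemma pqBinom_rec (p q : ℂ) (i m : ℕ)
    (hi : pqFact p q i ≠ 0) (hm : pqFact p q m ≠ 0)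
    (h1 : p ^ (i + 1) ≠ q ^ (i + 1)) (h2 : p ^ (m + 1) ≠ q ^ (m + 1)) :
    pqBinomCoef p q (i + m + 2) (i + 1)
      = q ^ (i + 1) * pqBinomCoef p q (i + m + 1) (i + 1)
        + p ^ (m + 1) * pqBinomCoef p q (i + m + 1) i := by
  have h1' : p ^ (i + 1) - q ^ (i + 1) ≠ 0 := sub_ne_zero.mpr h1
  have h2' : p ^ (m + 1) - q ^ (m + 1) ≠ 0 := sub_ne_zero.mpr h2
  have e0 : i + m + 2 = (i + m + 1) + 1 := rfl
  have e1 : i + m + 2 - (i + 1) = m + 1 := by omega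
  have e2 : i + m + 1 - (i + 1) = m := by omega
  have e3 : i + m + 1 - i = m + 1 := by omega
  rw [pqBinomCoef, pqBinomCoef, pqBinomCoef, e1, e2, e3, e0,
    pqFact_succ p q (i + m + 1), pqFact_succ p q i, pqFact_succ p q m]
  field_simp
  ring

lemma mul_left_swap {R : Type*} [Ring R] {u v : R} (h : u * v = v * u) (c : R) :
    u * (v * c) = v * (u * c) := by rw [← mul_assoc, h, mul_assoc]

theorem noncommutative_pq_binomial_theorem {R : Type*} [Ring R] [Algebra ℂ R]
    (p q : ℂ) (hp : p ≠ 0) (hq : q ≠ 0) (x y a b : R)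
    (hxy : x * y = q • (y * x)) (hab : a * b = p⁻¹ • (b * a))
    (hax : a * x = x * a) (hay : a * y = y * a)
    (hbx : b * x = x * b) (hby : b * y = y * b)
    (n : ℕ) (h : ∀ j, 1 ≤ j → j ≤ n → p ^ j ≠ q ^ j) :
    (a * x + b * y) ^ n =
      ∑ k ∈ Finset.range (n + 1),
        pqBinomCoef p q n k • (a ^ (n - k) * b ^ k * y ^ k * x ^ (n - k)) := by
  have hba : b * a = p • (a * b) := by
    rw [hab, smul_smul, mul_inv_cancel₀ hp, one_smul]
  have hbam : ∀ m : ℕ, b * a ^ m = (p ^ m) • (a ^ m * b) := by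
    intro m
    induction m with
    | zero => simp
    | succ m ih =>
      rw [pow_succ', ← mul_assoc, hba, smul_mul_assoc, mul_assoc, ih,
        mul_smul_comm, smul_smul, ← pow_succ', ← mul_assoc, ← pow_succ']
  have hxyk : ∀ k : ℕ, x * y ^ k = (q ^ k) • (y ^ k * x) := by
    intro k
    induction k with
    | zero => simp
    | succ k ih =>
      rw [pow_succ', ← mul_assoc, hxy, smul_mul_assoc, mul_assoc, ih,
        mul_smul_comm, smul_smul, ← pow_succ', ← mul_assoc, ← pow_succ']
  have cax : Commute a x := hax
  have cay : Commute a y := hay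
  have cbx : Commute b x := hbx
  have cby : Commute b y := hby
  have hterm1 : ∀ m k : ℕ,
      (a * x) * (a ^ m * b ^ k * y ^ k * x ^ m)
        = (q ^ k) • (a ^ (m + 1) * b ^ k * y ^ k * x ^ (m + 1)) := by
    intro m k
    simp only [mul_assoc]
    rw [mul_left_swap ((cax.pow_left m).eq).symm,
        mul_left_swap ((cbx.pow_left k).eq).symm,
        ← mul_assoc x (y ^ k) (x ^ m), hxyk k, smul_mul_assoc, mul_assoc]
    simp only [mul_smul_comm, pow_succ', mul_assoc]
  have hterm2 : ∀ m k : ℕ,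
      (b * y) * (a ^ m * b ^ k * y ^ k * x ^ m)
        = (p ^ m) • (a ^ m * b ^ (k + 1) * y ^ (k + 1) * x ^ m) := by
    intro m k
    simp only [mul_assoc]
    rw [mul_left_swap ((cay.pow_left m).eq).symm,
        mul_left_swap ((cby.pow_left k).eq).symm,
        ← mul_assoc b (a ^ m), hbam m, smul_mul_assoc, mul_assoc]
    simp only [pow_succ', mul_assoc]
  induction n with
  | zero => simp [pqBinomCoef, pqFact]
  | succ n ih =>
    have h' : ∀ j, 1 ≤ j → j ≤ n → p ^ j ≠ q ^ j := fun j hj1 hj2 => h j hj1 (by omega)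
    have hF : ∀ m, m ≤ n + 1 → pqFact p q m ≠ 0 := fun m hm =>
      pqFact_ne_zero p q m (fun j hj1 hj2 => h j hj1 (by omega))
    rw [pow_succ', ih h', Finset.mul_sum]
    have key : ∀ k ∈ Finset.range (n + 1),
        (a * x + b * y) * (pqBinomCoef p q n k • (a ^ (n - k) * b ^ k * y ^ k * x ^ (n - k)))
          = (pqBinomCoef p q n k * q ^ k) •
              (a ^ (n + 1 - k) * b ^ k * y ^ k * x ^ (n + 1 - k))
            + (pqBinomCoef p q n k * p ^ (n - k)) •
              (a ^ (n - k) * b ^ (k + 1) * y ^ (k + 1) * x ^ (n - k)) := by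
      intro k hk
      have hk' : k ≤ n := Nat.lt_succ_iff.mp (Finset.mem_range.mp hk)
      have e : n - k + 1 = n + 1 - k := by omega
      rw [mul_smul_comm, add_mul, hterm1 (n - k) k, hterm2 (n - k) k, smul_add,
        smul_smul, smul_smul, e]
    rw [Finset.sum_congr rfl key, Finset.sum_add_distrib]
    have sumswap : ∀ (A B g : ℕ → R),
        A 0 = g 0 → B n = g (n + 1) →
        (∀ i ∈ Finset.range n, A (i + 1) + B i = g (i + 1)) →
        (∑ k ∈ Finset.range (n + 1), A k) + (∑ k ∈ Finset.range (n + 1), B k)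
          = ∑ k ∈ Finset.range (n + 1 + 1), g k := by
      intro A B g h0 hn hmid
      have hmidsum : (∑ i ∈ Finset.range n, A (i + 1)) + ∑ i ∈ Finset.range n, B i
          = ∑ i ∈ Finset.range n, g (i + 1) := by
        rw [← Finset.sum_add_distrib]
        exact Finset.sum_congr rfl hmid
      rw [Finset.sum_range_succ' A n, Finset.sum_range_succ B n,
        Finset.sum_range_succ' g (n + 1), Finset.sum_range_succ, h0, hn, ← hmidsum]
      abel
    refine sumswap _ _ _ ?_ ?_ ?_
    · simp [pqBinom_zero p q n (hF n (by omega)),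
        pqBinom_zero p q (n + 1) (hF (n + 1) le_rfl)]
    · simp [pqBinom_self p q n (hF n (by omega)),
        pqBinom_self p q (n + 1) (hF (n + 1) le_rfl)]
    · intro i hi
      have hi' : i < n := Finset.mem_range.mp hi
      obtain ⟨m, rfl⟩ : ∃ m, n = i + m + 1 := ⟨n - i - 1, by omega⟩
      have e1 : i + m + 1 + 1 - (i + 1) = m + 1 := by omega
      have e2 : i + m + 1 - i = m + 1 := by omega
      have e3 : i + m + 1 + 1 = i + m + 2 := rfl
      rw [e1, e2, e3,
        pqBinom_rec p q i m (hF i (by omega)) (hF m (by omega))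
          (h (i + 1) (by omega) (by omega)) (h (m + 1) (by omega) (by omega)),
        add_smul, mul_comm (q ^ (i + 1)), mul_comm (p ^ (m + 1))]
end

section
/- For 0 < |q| < |p| ≤ 1 (ensuring convergence) and |z| sufficiently small, the (p,q)-binomial theorem for the series ₁Φ₀ holds: Σ_{n=0}^∞ (((a,b);(p,q))_n / ((p,q);(p,q))_n) z^n = ∏_{k=0}^∞ (p^{k+1} - b z q^k)/(p^{k+1} - a z q^k). -/
open Finset Filter Topology

section QBinomial

variable {a b Q w : ℂ}

noncomputable def qBinomCoeff (a b Q : ℂ) (n : ℕ) : ℂ :=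
  ∏ j ∈ range n, (a - b * Q ^ j) / (1 - Q ^ (j + 1))

noncomputable def qBinomSeries (a b Q w : ℂ) : ℂ :=
  ∑' n, qBinomCoeff a b Q n * w ^ n

lemma one_sub_ne_zero_of_norm_lt_one {x : ℂ} (hx : ‖x‖ < 1) : 1 - x ≠ 0 := by
  rw [sub_ne_zero]
  rintro rfl
  simp at hx

lemma norm_mul_pow_le (hQ : ‖Q‖ ≤ 1) (x : ℂ) (k : ℕ) : ‖x * Q ^ k‖ ≤ ‖x‖ := by
  rw [norm_mul, norm_pow]
  exact mul_le_of_le_one_right (norm_nonneg x) (pow_le_one₀ (norm_nonneg Q) hQ)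

lemma qBinomCoeff_succ_mul (hQ : ‖Q‖ < 1) (n : ℕ) :
    qBinomCoeff a b Q (n + 1) * (1 - Q ^ (n + 1)) = qBinomCoeff a b Q n * (a - b * Q ^ n) := by
  have hQn : ‖Q ^ (n + 1)‖ < 1 := by
    rw [norm_pow]
    exact pow_lt_one₀ (norm_nonneg Q) hQ n.succ_ne_zero
  rw [qBinomCoeff, prod_range_succ, ← qBinomCoeff, mul_assoc,
    div_mul_cancel₀ _ (one_sub_ne_zero_of_norm_lt_one hQn)]

lemma norm_qBinomCoeff_le (hQ : ‖Q‖ < 1) (n : ℕ) :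
    ‖qBinomCoeff a b Q n‖ ≤ ((‖a‖ + ‖b‖) / (1 - ‖Q‖)) ^ n := by
  have hfactor (j : ℕ) : ‖(a - b * Q ^ j) / (1 - Q ^ (j + 1))‖ ≤ (‖a‖ + ‖b‖) / (1 - ‖Q‖) := by
    have hQ' : 0 < 1 - ‖Q‖ := by linarith
    rw [norm_div]
    refine div_le_div₀ (by positivity) ?_ hQ' ?_
    · calc ‖a - b * Q ^ j‖ ≤ ‖a‖ + ‖b * Q ^ j‖ := norm_sub_le _ _
        _ ≤ ‖a‖ + ‖b‖ := by gcongr; exact norm_mul_pow_le hQ.le b j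
    · calc 1 - ‖Q‖ ≤ 1 - ‖Q * Q ^ j‖ := by gcongr; exact norm_mul_pow_le hQ.le Q j
        _ ≤ ‖1 - Q ^ (j + 1)‖ := by simpa [pow_succ'] using norm_sub_norm_le (1 : ℂ) (Q ^ (j + 1))
  rw [qBinomCoeff, norm_prod]
  exact (prod_le_prod (fun j _ ↦ norm_nonneg _) (fun j _ ↦ hfactor j)).trans_eq
    (by rw [prod_const, card_range])

lemma norm_lt_one_of_mul_norm_lt (hw : (‖a‖ + ‖b‖) * ‖w‖ < 1 - ‖Q‖) : ‖Q‖ < 1 := by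
  have : 0 ≤ (‖a‖ + ‖b‖) * ‖w‖ := by positivity
  linarith

lemma mul_norm_lt_of_norm_le {w' : ℂ} (hw : (‖a‖ + ‖b‖) * ‖w‖ < 1 - ‖Q‖) (h : ‖w'‖ ≤ ‖w‖) :
    (‖a‖ + ‖b‖) * ‖w'‖ < 1 - ‖Q‖ :=
  lt_of_le_of_lt (by gcongr) hw

lemma norm_mul_lt_one (hw : (‖a‖ + ‖b‖) * ‖w‖ < 1 - ‖Q‖) : ‖a * w‖ < 1 := by
  have : ‖a‖ * ‖w‖ ≤ (‖a‖ + ‖b‖) * ‖w‖ := by gcongr; simp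
  rw [norm_mul]
  linarith [norm_nonneg Q]

lemma summable_norm_qBinomCoeff_mul_pow (hw : (‖a‖ + ‖b‖) * ‖w‖ < 1 - ‖Q‖) :
    Summable fun n ↦ ‖qBinomCoeff a b Q n * w ^ n‖ := by
  have hQ := norm_lt_one_of_mul_norm_lt hw
  have hr : (‖a‖ + ‖b‖) / (1 - ‖Q‖) * ‖w‖ < 1 := by
    rwa [div_mul_eq_mul_div, div_lt_one (by linarith)]
  refine .of_nonneg_of_le (fun n ↦ norm_nonneg _) (fun n ↦ ?_)
    (summable_geometric_of_lt_one (by positivity) hr)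
  rw [norm_mul, norm_pow, mul_pow]
  gcongr
  exact norm_qBinomCoeff_le hQ n

lemma qBinomSeries_sub_qBinomSeries_mul (hw : (‖a‖ + ‖b‖) * ‖w‖ < 1 - ‖Q‖) :
    qBinomSeries a b Q w - qBinomSeries a b Q (w * Q) =
      w * (a * qBinomSeries a b Q w - b * qBinomSeries a b Q (w * Q)) := by
  have hQ := norm_lt_one_of_mul_norm_lt hw
  have hwQ : (‖a‖ + ‖b‖) * ‖w * Q‖ < 1 - ‖Q‖ :=
    mul_norm_lt_of_norm_le hw (by simpa using norm_mul_pow_le hQ.le w 1)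
  have hs := (summable_norm_qBinomCoeff_mul_pow hw).of_norm
  have hs' := (summable_norm_qBinomCoeff_mul_pow hwQ).of_norm
  have hdiff : Summable fun n ↦ qBinomCoeff a b Q n * (1 - Q ^ n) * w ^ n :=
    (hs.sub hs').congr fun n ↦ by ring
  calc qBinomSeries a b Q w - qBinomSeries a b Q (w * Q)
      = ∑' n, qBinomCoeff a b Q n * (1 - Q ^ n) * w ^ n := by
        rw [qBinomSeries, qBinomSeries, ← hs.tsum_sub hs']
        exact tsum_congr fun n ↦ by ring
    _ = ∑' n, qBinomCoeff a b Q (n + 1) * (1 - Q ^ (n + 1)) * w ^ (n + 1) := by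
        rw [hdiff.tsum_eq_zero_add]
        simp
    _ = ∑' n, w * (a * (qBinomCoeff a b Q n * w ^ n) - b * (qBinomCoeff a b Q n * (w * Q) ^ n)) :=
        tsum_congr fun n ↦ by rw [qBinomCoeff_succ_mul hQ]; ring
    _ = w * (a * qBinomSeries a b Q w - b * qBinomSeries a b Q (w * Q)) := by
        rw [tsum_mul_left, (hs.mul_left a).tsum_sub (hs'.mul_left b), tsum_mul_left, tsum_mul_left,
          qBinomSeries, qBinomSeries]

lemma qBinomSeries_eq_mul_qBinomSeries_mul (hw : (‖a‖ + ‖b‖) * ‖w‖ < 1 - ‖Q‖) :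
    qBinomSeries a b Q w = (1 - b * w) / (1 - a * w) * qBinomSeries a b Q (w * Q) := by
  rw [div_mul_eq_mul_div, eq_div_iff (one_sub_ne_zero_of_norm_lt_one (norm_mul_lt_one hw))]
  linear_combination qBinomSeries_sub_qBinomSeries_mul hw

lemma qBinomSeries_eq_prod_mul (hw : (‖a‖ + ‖b‖) * ‖w‖ < 1 - ‖Q‖) (N : ℕ) :
    qBinomSeries a b Q w =
      (∏ k ∈ range N, (1 - b * w * Q ^ k) / (1 - a * w * Q ^ k)) *
        qBinomSeries a b Q (w * Q ^ N) := by
  have hQ := norm_lt_one_of_mul_norm_lt hw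
  induction N with
  | zero => simp
  | succ N ih =>
    have hwN := mul_norm_lt_of_norm_le hw (norm_mul_pow_le hQ.le w N)
    rw [ih, qBinomSeries_eq_mul_qBinomSeries_mul hwN, prod_range_succ, pow_succ]
    simp only [mul_assoc]

lemma tendsto_qBinomSeries_mul_pow (hw : (‖a‖ + ‖b‖) * ‖w‖ < 1 - ‖Q‖) :
    Tendsto (fun N ↦ qBinomSeries a b Q (w * Q ^ N)) atTop (𝓝 1) := by
  have hQ := norm_lt_one_of_mul_norm_lt hw
  have hterm (n : ℕ) : Tendsto (fun N ↦ qBinomCoeff a b Q n * (w * Q ^ N) ^ n) atTop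
      (𝓝 (qBinomCoeff a b Q n * (w * 0) ^ n)) :=
    (((tendsto_pow_atTop_nhds_zero_of_norm_lt_one hQ).const_mul w).pow n).const_mul _
  have hbound : ∀ᶠ N in atTop, ∀ n, ‖qBinomCoeff a b Q n * (w * Q ^ N) ^ n‖ ≤
      ‖qBinomCoeff a b Q n * w ^ n‖ := .of_forall fun N n ↦ by
    simp only [norm_mul, norm_pow]
    gcongr
    simpa using norm_mul_pow_le hQ.le w N
  have := tendsto_tsum_of_dominated_convergence (summable_norm_qBinomCoeff_mul_pow hw) hterm hbound
  rwa [tsum_eq_single 0 fun n hn ↦ by simp [hn], pow_zero, mul_one, qBinomCoeff,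
    prod_range_zero] at this

lemma multipliable_qBinom_factor (hw : (‖a‖ + ‖b‖) * ‖w‖ < 1 - ‖Q‖) :
    Multipliable fun k : ℕ ↦ (1 - b * w * Q ^ k) / (1 - a * w * Q ^ k) := by
  have hQ := norm_lt_one_of_mul_norm_lt hw
  have haw := norm_mul_lt_one hw
  have hawk (k : ℕ) : ‖a * w * Q ^ k‖ ≤ ‖a * w‖ := norm_mul_pow_le hQ.le _ k
  have hden (k : ℕ) : 1 - ‖a * w‖ ≤ ‖1 - a * w * Q ^ k‖ :=
    calc 1 - ‖a * w‖ ≤ 1 - ‖a * w * Q ^ k‖ := by gcongr; exact hawk k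
      _ ≤ ‖1 - a * w * Q ^ k‖ := by simpa using norm_sub_norm_le (1 : ℂ) (a * w * Q ^ k)
  have hsum : Summable fun k : ℕ ↦ ‖(a - b) * w * Q ^ k / (1 - a * w * Q ^ k)‖ := by
    refine .of_nonneg_of_le (fun k ↦ norm_nonneg _) (fun k ↦ ?_)
      ((summable_geometric_of_lt_one (norm_nonneg Q) hQ).mul_left (‖(a - b) * w‖ / (1 - ‖a * w‖)))
    rw [norm_div, norm_mul _ (Q ^ k), norm_pow, div_mul_eq_mul_div, mul_comm]
    exact div_le_div_of_nonneg_left (by positivity) (by linarith) (hden k)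
  refine (multipliable_one_add_of_summable hsum).congr fun k ↦ ?_
  rw [one_add_div (one_sub_ne_zero_of_norm_lt_one ((hawk k).trans_lt haw))]
  ring_nf

theorem qBinomSeries_eq_tprod (hw : (‖a‖ + ‖b‖) * ‖w‖ < 1 - ‖Q‖) :
    qBinomSeries a b Q w = ∏' k : ℕ, (1 - b * w * Q ^ k) / (1 - a * w * Q ^ k) := by
  have hlim := (multipliable_qBinom_factor hw).hasProd.tendsto_prod_nat.mul
    (tendsto_qBinomSeries_mul_pow hw)
  rw [mul_one] at hlim
  exact tendsto_nhds_unique (tendsto_const_nhds.congr (qBinomSeries_eq_prod_mul hw)) hlim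

end QBinomial

section PQ

variable {a b p q : ℂ}

lemma pqPoch_div_pqPoch_mul_pow_eq (hp : p ≠ 0) (z : ℂ) (n : ℕ) :
    pqPoch a b p q n / pqPoch p q p q n * z ^ n = qBinomCoeff a b (q / p) n * (z / p) ^ n := by
  have hfactor (j : ℕ) : (a * p ^ j - b * q ^ j) / (p * p ^ j - q * q ^ j) * z =
      (a - b * (q / p) ^ j) / (1 - (q / p) ^ (j + 1)) * (z / p) := by
    have hnum : a * p ^ j - b * q ^ j = p ^ j * (a - b * (q / p) ^ j) := by
      rw [div_pow]; field_simp
    have hden : p * p ^ j - q * q ^ j = p ^ j * (p * (1 - (q / p) ^ (j + 1))) := by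
      rw [div_pow]; field_simp; ring
    rw [hnum, hden, mul_div_mul_left _ _ (pow_ne_zero j hp), div_mul_eq_mul_div, div_mul_div_comm,
      mul_comm p]
  calc pqPoch a b p q n / pqPoch p q p q n * z ^ n
      = ∏ j ∈ range n, (a * p ^ j - b * q ^ j) / (p * p ^ j - q * q ^ j) * z := by
        rw [prod_mul_distrib, prod_div_distrib, prod_const, card_range, pqPoch, pqPoch]
    _ = ∏ j ∈ range n, (a - b * (q / p) ^ j) / (1 - (q / p) ^ (j + 1)) * (z / p) :=
        prod_congr rfl fun j _ ↦ hfactor j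
    _ = qBinomCoeff a b (q / p) n * (z / p) ^ n := by
        rw [prod_mul_distrib, prod_const, card_range, qBinomCoeff]

lemma pq_binomial_factor_eq (hp : p ≠ 0) (z : ℂ) (k : ℕ) :
    (p ^ (k + 1) - b * z * q ^ k) / (p ^ (k + 1) - a * z * q ^ k) =
      (1 - b * (z / p) * (q / p) ^ k) / (1 - a * (z / p) * (q / p) ^ k) := by
  have hscale (c : ℂ) :
      p ^ (k + 1) - c * z * q ^ k = p ^ (k + 1) * (1 - c * (z / p) * (q / p) ^ k) := by
    rw [div_pow]; field_simp; ring
  rw [hscale, hscale, mul_div_mul_left _ _ (pow_ne_zero _ hp)]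

end PQ

theorem pq_binomial_series_general (a b p q : ℂ)
    (hqp : ‖q‖ < ‖p‖) :
    ∃ ε > 0, ∀ z : ℂ, ‖z‖ < ε →
      ∑' n : ℕ, pqPoch a b p q n / pqPoch p q p q n * z ^ n =
        ∏' k : ℕ, (p ^ (k + 1) - b * z * q ^ k) / (p ^ (k + 1) - a * z * q ^ k) := by
  have hpq : 0 < ‖p‖ - ‖q‖ := sub_pos.mpr hqp
  have hp : 0 < ‖p‖ := (norm_nonneg q).trans_lt hqp
  have hp0 : p ≠ 0 := norm_pos_iff.mp hp
  refine ⟨(‖p‖ - ‖q‖) / (‖a‖ + ‖b‖ + 1), by positivity, fun z hz ↦ ?_⟩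
  have hw : (‖a‖ + ‖b‖) * ‖z / p‖ < 1 - ‖q / p‖ := by
    rw [lt_div_iff₀ (by positivity)] at hz
    rw [norm_div, norm_div, mul_div_assoc', div_lt_iff₀ hp, sub_mul, div_mul_cancel₀ _ hp.ne',
      one_mul]
    nlinarith [norm_nonneg z]
  simp_rw [pqPoch_div_pqPoch_mul_pow_eq hp0, pq_binomial_factor_eq hp0]
  exact qBinomSeries_eq_tprod hw

theorem pq_binomial_series (a b p q : ℂ)
    (hq : 0 < ‖q‖) (hqp : ‖q‖ < ‖p‖) (hp : ‖p‖ ≤ 1) :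
    ∃ ε > 0, ∀ z : ℂ, ‖z‖ < ε →
      ∑' n : ℕ, pqPoch a b p q n / pqPoch p q p q n * z ^ n =
        ∏' k : ℕ, (p ^ (k + 1) - b * z * q ^ k) / (p ^ (k + 1) - a * z * q ^ k) :=
  pq_binomial_series_general a b p q hqp
end

section
/- For |q| < |p| ≤ 1 and appropriate convergence conditions, the transitivity formula ₁Φ₀((u,v);—;(p,q),z) · ₁Φ₀((v,w);—;(p,q),z) = ₁Φ₀((u,w);—;(p,q),z) holds. -/
/-- The series `₁Φ₀((a,b);—;(p,q),z)`. -/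
noncomputable def Phi10 (a b p q z : ℂ) : ℂ :=
  ∑' n : ℕ, pqPoch a b p q n / pqPoch p q p q n * z ^ n

namespace Phi10Aux

variable {p q : ℂ}

/-- The coefficient of the series. -/
noncomputable def c (a b p q : ℂ) (n : ℕ) : ℂ := pqPoch a b p q n / pqPoch p q p q n

lemma pow_sub_ne (hqp : ‖q‖ < ‖p‖) (n : ℕ) : p ^ (n + 1) - q ^ (n + 1) ≠ 0 := by
  have h : ‖q ^ (n + 1)‖ < ‖p ^ (n + 1)‖ := by
    rw [norm_pow, norm_pow]
    exact pow_lt_pow_left₀ hqp (norm_nonneg q) (Nat.succ_ne_zero n)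
  intro h0
  rw [sub_eq_zero] at h0
  rw [h0] at h
  exact lt_irrefl _ h

lemma den_ne (hqp : ‖q‖ < ‖p‖) (n : ℕ) : pqPoch p q p q n ≠ 0 := by
  rw [pqPoch]
  refine Finset.prod_ne_zero_iff.2 fun j _ => ?_
  have : p * p ^ j - q * q ^ j = p ^ (j + 1) - q ^ (j + 1) := by
    rw [pow_succ, pow_succ]; ring
  rw [this]
  exact pow_sub_ne hqp j

lemma c_zero (a b : ℂ) : c a b p q 0 = 1 := by
  simp [c, pqPoch]

lemma c_succ (hqp : ‖q‖ < ‖p‖) (a b : ℂ) (n : ℕ) :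
    c a b p q (n + 1) * (p ^ (n + 1) - q ^ (n + 1)) =
      (a * p ^ n - b * q ^ n) * c a b p q n := by
  have hd : pqPoch p q p q n ≠ 0 := den_ne hqp n
  have hd' : p ^ (n + 1) - q ^ (n + 1) ≠ 0 := pow_sub_ne hqp n
  have h1 : pqPoch a b p q (n + 1) = pqPoch a b p q n * (a * p ^ n - b * q ^ n) := by
    rw [pqPoch, pqPoch, Finset.prod_range_succ]
  have h2 : pqPoch p q p q (n + 1) = pqPoch p q p q n * (p ^ (n + 1) - q ^ (n + 1)) := by
    rw [pqPoch, pqPoch, Finset.prod_range_succ, pow_succ, pow_succ]; ring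
  rw [c, c, h1, h2]
  field_simp

/-- The key convolution identity. -/
lemma conv (hqp : ‖q‖ < ‖p‖) (u v w : ℂ) (n : ℕ) :
    ∑ k ∈ Finset.range (n + 1), c u v p q k * c v w p q (n - k) = c u w p q n := by
  induction n with
  | zero => simp [c_zero]
  | succ n ih =>
    apply mul_right_cancel₀ (pow_sub_ne hqp n)
    rw [Finset.sum_mul]
    have split : ∀ k ∈ Finset.range (n + 2),
        c u v p q k * c v w p q (n + 1 - k) * (p ^ (n + 1) - q ^ (n + 1)) =
          p ^ (n + 1 - k) * ((p ^ k - q ^ k) * c u v p q k) * c v w p q (n + 1 - k) +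
          q ^ k * c u v p q k *
            ((p ^ (n + 1 - k) - q ^ (n + 1 - k)) * c v w p q (n + 1 - k)) := by
      intro k hk
      have hk' : k ≤ n + 1 := Nat.lt_succ_iff.mp (Finset.mem_range.mp hk)
      have hp' : p ^ (n + 1 - k) * p ^ k = p ^ (n + 1) := by
        rw [← pow_add, Nat.sub_add_cancel hk']
      have hq' : q ^ k * q ^ (n + 1 - k) = q ^ (n + 1) := by
        rw [← pow_add, Nat.add_sub_cancel' hk']
      linear_combination (c u v p q k * c v w p q (n + 1 - k)) * (hq' - hp')
    rw [Finset.sum_congr rfl split, Finset.sum_add_distrib]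
    have hA : ∑ k ∈ Finset.range (n + 2),
        p ^ (n + 1 - k) * ((p ^ k - q ^ k) * c u v p q k) * c v w p q (n + 1 - k) =
        ∑ k ∈ Finset.range (n + 1),
          p ^ (n - k) * ((u * p ^ k - v * q ^ k) * c u v p q k) * c v w p q (n - k) := by
      rw [Finset.sum_range_succ']
      simp only [pow_zero, sub_self, zero_mul, mul_zero, add_zero]
      refine Finset.sum_congr rfl fun k hk => ?_
      have h1 : n + 1 - (k + 1) = n - k := by omega
      rw [h1]
      have := c_succ hqp u v k
      rw [mul_comm (c u v p q (k + 1)) (p ^ (k + 1) - q ^ (k + 1))] at this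
      rw [this]
    have hB : ∑ k ∈ Finset.range (n + 2),
        q ^ k * c u v p q k *
          ((p ^ (n + 1 - k) - q ^ (n + 1 - k)) * c v w p q (n + 1 - k)) =
        ∑ k ∈ Finset.range (n + 1),
          q ^ k * c u v p q k * ((v * p ^ (n - k) - w * q ^ (n - k)) * c v w p q (n - k)) := by
      rw [Finset.sum_range_succ]
      simp only [Nat.sub_self, pow_zero, sub_self, zero_mul, mul_zero, add_zero]
      refine Finset.sum_congr rfl fun k hk => ?_
      have hk' : k ≤ n := Nat.lt_succ_iff.mp (Finset.mem_range.mp hk)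
      have h1 : n + 1 - k = (n - k) + 1 := by omega
      rw [h1]
      have := c_succ hqp v w (n - k)
      rw [mul_comm (c v w p q (n - k + 1)) (p ^ (n - k + 1) - q ^ (n - k + 1))] at this
      rw [this]
    rw [hA, hB, ← Finset.sum_add_distrib]
    have hsum : ∑ k ∈ Finset.range (n + 1),
        (p ^ (n - k) * ((u * p ^ k - v * q ^ k) * c u v p q k) * c v w p q (n - k) +
          q ^ k * c u v p q k * ((v * p ^ (n - k) - w * q ^ (n - k)) * c v w p q (n - k))) =
        (u * p ^ n - w * q ^ n) *
          ∑ k ∈ Finset.range (n + 1), c u v p q k * c v w p q (n - k) := by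
      rw [Finset.mul_sum]
      refine Finset.sum_congr rfl fun k hk => ?_
      have hk' : k ≤ n := Nat.lt_succ_iff.mp (Finset.mem_range.mp hk)
      have hp' : p ^ (n - k) * p ^ k = p ^ n := by
        rw [← pow_add, Nat.sub_add_cancel hk']
      have hq' : q ^ k * q ^ (n - k) = q ^ n := by
        rw [← pow_add, Nat.add_sub_cancel' hk']
      linear_combination (c u v p q k * c v w p q (n - k)) * (u * hp' - w * hq')
    rw [hsum, ih, ← c_succ hqp u w n]

/-- Norm bound on the coefficient. -/
lemma c_bound (hqp : ‖q‖ < ‖p‖) (hp : ‖p‖ ≤ 1) (a b : ℂ) (n : ℕ) :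
    ‖c a b p q n‖ ≤ ((‖a‖ + ‖b‖) / (‖p‖ - ‖q‖)) ^ n := by
  induction n with
  | zero => simp [c_zero]
  | succ n ih =>
    have hd' : p ^ (n + 1) - q ^ (n + 1) ≠ 0 := pow_sub_ne hqp n
    have hrec : c a b p q (n + 1) =
        (a * p ^ n - b * q ^ n) * c a b p q n / (p ^ (n + 1) - q ^ (n + 1)) := by
      rw [eq_div_iff hd', c_succ hqp a b n]
    have hppos : (0:ℝ) < ‖p‖ := lt_of_le_of_lt (norm_nonneg q) hqp
    have hpq : (0:ℝ) < ‖p‖ - ‖q‖ := by linarith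
    have hpn : (0:ℝ) < ‖p‖ ^ n := pow_pos hppos n
    have hnum : ‖a * p ^ n - b * q ^ n‖ ≤ (‖a‖ + ‖b‖) * ‖p‖ ^ n := by
      calc ‖a * p ^ n - b * q ^ n‖ ≤ ‖a * p ^ n‖ + ‖b * q ^ n‖ := norm_sub_le _ _
        _ = ‖a‖ * ‖p‖ ^ n + ‖b‖ * ‖q‖ ^ n := by rw [norm_mul, norm_mul, norm_pow, norm_pow]
        _ ≤ ‖a‖ * ‖p‖ ^ n + ‖b‖ * ‖p‖ ^ n := by
            gcongr
        _ = (‖a‖ + ‖b‖) * ‖p‖ ^ n := by ring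
    have hden : (‖p‖ - ‖q‖) * ‖p‖ ^ n ≤ ‖p ^ (n + 1) - q ^ (n + 1)‖ := by
      have h1 : ‖p ^ (n + 1)‖ - ‖q ^ (n + 1)‖ ≤ ‖p ^ (n + 1) - q ^ (n + 1)‖ :=
        norm_sub_norm_le _ _
      have h2 : ‖q‖ ^ (n + 1) ≤ ‖q‖ * ‖p‖ ^ n := by
        rw [pow_succ']
        gcongr
      have h3 : ‖p‖ ^ (n + 1) = ‖p‖ * ‖p‖ ^ n := pow_succ' _ _
      rw [norm_pow, norm_pow] at h1
      nlinarith
    have hfac : ‖(a * p ^ n - b * q ^ n) / (p ^ (n + 1) - q ^ (n + 1))‖ ≤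
        (‖a‖ + ‖b‖) / (‖p‖ - ‖q‖) := by
      rw [norm_div]
      have hdpos : (0:ℝ) < ‖p ^ (n + 1) - q ^ (n + 1)‖ := norm_pos_iff.2 hd'
      calc ‖a * p ^ n - b * q ^ n‖ / ‖p ^ (n + 1) - q ^ (n + 1)‖
          ≤ ((‖a‖ + ‖b‖) * ‖p‖ ^ n) / ((‖p‖ - ‖q‖) * ‖p‖ ^ n) := by
            apply div_le_div₀ (by positivity) hnum (by positivity) hden
        _ = (‖a‖ + ‖b‖) / (‖p‖ - ‖q‖) := by
            rw [mul_div_mul_right _ _ (ne_of_gt hpn)]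
    calc ‖c a b p q (n + 1)‖
        = ‖(a * p ^ n - b * q ^ n) / (p ^ (n + 1) - q ^ (n + 1))‖ * ‖c a b p q n‖ := by
          rw [hrec, ← norm_mul]; ring_nf
      _ ≤ (‖a‖ + ‖b‖) / (‖p‖ - ‖q‖) * ((‖a‖ + ‖b‖) / (‖p‖ - ‖q‖)) ^ n := by
          apply mul_le_mul hfac ih (norm_nonneg _) (by positivity)
      _ = ((‖a‖ + ‖b‖) / (‖p‖ - ‖q‖)) ^ (n + 1) := by rw [pow_succ']

end Phi10Aux

open Phi10Aux in
theorem Phi10_transitivity (u v w p q : ℂ) (hqp : ‖q‖ < ‖p‖) (hp : ‖p‖ ≤ 1) :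
    ∃ ε > 0, ∀ z : ℂ, ‖z‖ < ε →
      Phi10 u v p q z * Phi10 v w p q z = Phi10 u w p q z := by
  set C : ℝ := ‖u‖ + ‖v‖ + ‖w‖ + 1 with hC
  have hCpos : 0 < C := by positivity
  have hpq : (0:ℝ) < ‖p‖ - ‖q‖ := by linarith
  refine ⟨(‖p‖ - ‖q‖) / (2 * C), by positivity, fun z hz => ?_⟩
  -- summability of each series
  have key : ∀ a b : ℂ, ‖a‖ + ‖b‖ ≤ C →
      Summable fun n : ℕ => ‖c a b p q n * z ^ n‖ := by
    intro a b hab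
    have hM : ∀ n : ℕ, ‖c a b p q n * z ^ n‖ ≤ (C / (‖p‖ - ‖q‖) * ‖z‖) ^ n := by
      intro n
      rw [norm_mul, norm_pow, mul_pow]
      apply mul_le_mul _ le_rfl (by positivity) (by positivity)
      calc ‖c a b p q n‖ ≤ ((‖a‖ + ‖b‖) / (‖p‖ - ‖q‖)) ^ n := c_bound hqp hp a b n
        _ ≤ (C / (‖p‖ - ‖q‖)) ^ n := by gcongr
      -- may need extra
    have hr : C / (‖p‖ - ‖q‖) * ‖z‖ < 1 := by
      rw [div_mul_eq_mul_div, div_lt_one hpq]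
      calc C * ‖z‖ < C * ((‖p‖ - ‖q‖) / (2 * C)) := by
            apply mul_lt_mul_of_pos_left hz hCpos
        _ = (‖p‖ - ‖q‖) / 2 := by field_simp
        _ < ‖p‖ - ‖q‖ := by linarith
    exact Summable.of_nonneg_of_le (fun n => norm_nonneg _) hM
      (summable_geometric_of_lt_one (by positivity) hr)
  have h1 : Summable fun n : ℕ => ‖c u v p q n * z ^ n‖ := key u v (by rw [hC]; linarith [norm_nonneg w])
  have h2 : Summable fun n : ℕ => ‖c v w p q n * z ^ n‖ := key v w (by rw [hC]; linarith [norm_nonneg u])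
  have hPhi : ∀ a b : ℂ, Phi10 a b p q z = ∑' n : ℕ, c a b p q n * z ^ n := by
    intro a b; rfl
  rw [hPhi, hPhi, hPhi, tsum_mul_tsum_eq_tsum_sum_range_of_summable_norm h1 h2]
  apply tsum_congr
  intro n
  have : ∑ k ∈ Finset.range (n + 1), c u v p q k * z ^ k * (c v w p q (n - k) * z ^ (n - k)) =
      (∑ k ∈ Finset.range (n + 1), c u v p q k * c v w p q (n - k)) * z ^ n := by
    rw [Finset.sum_mul]
    refine Finset.sum_congr rfl fun k hk => ?_
    have hk' : k ≤ n := Nat.lt_succ_iff.mp (Finset.mem_range.mp hk)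
    have hz' : z ^ k * z ^ (n - k) = z ^ n := by
      rw [← pow_add, Nat.add_sub_cancel' hk']
    linear_combination (c u v p q k * c v w p q (n - k)) * hz'
  rw [this, conv hqp u v w n]
end

section
/- For |z| < 1 and a positive integer n with 0 < q < 1, the generating function identity ₁φ₀(q^n; —; q, z) = Σ_{k=0}^∞ [n-1+k choose k]_q z^k = 1/(z;q)_n holds, i.e., Σ_{k=0}^∞ [n-1+k choose k]_q z^k · ∏_{j=0}^{n-1}(1 - z q^j) = 1. -/
/-- `(q;q)ₘ = ∏_{j=1}^{m} (1 - qʲ)`. -/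
def qFact (q : ℂ) (m : ℕ) : ℂ := ∏ j ∈ Finset.range m, (1 - q ^ (j + 1))

/-- The Gaussian `q`-binomial coefficient. -/
noncomputable def qBinomCoef (q : ℂ) (m k : ℕ) : ℂ :=
  qFact q m / (qFact q k * qFact q (m - k))

namespace QBinAux

/-- Real version of `qFact`. -/
def R (q : ℝ) (m : ℕ) : ℝ := ∏ j ∈ Finset.range m, (1 - q ^ (j + 1))

lemma R_pos {q : ℝ} (hq0 : 0 < q) (hq1 : q < 1) (m : ℕ) : 0 < R q m :=
  Finset.prod_pos fun j _ => sub_pos.2 (pow_lt_one₀ hq0.le hq1 (Nat.succ_ne_zero j))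

lemma R_succ (q : ℝ) (m : ℕ) : R q (m + 1) = R q m * (1 - q ^ (m + 1)) :=
  Finset.prod_range_succ _ _

lemma R_anti {q : ℝ} (hq0 : 0 < q) (hq1 : q < 1) {a b : ℕ} (h : a ≤ b) :
    R q b ≤ R q a := by
  obtain ⟨c, rfl⟩ := Nat.exists_eq_add_of_le h
  induction c with
  | zero => simp
  | succ c ih =>
    have h1 : R q (a + (c + 1)) = R q (a + c) * (1 - q ^ (a + c + 1)) := by
      rw [← R_succ]; ring_nf
    have h2 : (1 - q ^ (a + c + 1)) ≤ 1 := by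
      have : (0:ℝ) < q ^ (a + c + 1) := pow_pos hq0 _
      linarith
    calc R q (a + (c + 1)) ≤ R q (a + c) * 1 := by
          rw [h1]
          exact mul_le_mul_of_nonneg_left h2 (R_pos hq0 hq1 _).le
      _ = R q (a + c) := mul_one _
      _ ≤ R q a := ih (Nat.le_add_right a c)

lemma qFact_cast (q : ℝ) (m : ℕ) : qFact (q : ℂ) m = ((R q m : ℝ) : ℂ) := by
  simp [qFact, R]

lemma qFact_ne_zero {q : ℝ} (hq0 : 0 < q) (hq1 : q < 1) (m : ℕ) :
    qFact (q : ℂ) m ≠ 0 := by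
  rw [qFact_cast]
  exact_mod_cast (R_pos hq0 hq1 m).ne'

lemma qFact_succ (q : ℂ) (m : ℕ) : qFact q (m + 1) = qFact q m * (1 - q ^ (m + 1)) :=
  Finset.prod_range_succ _ _

lemma coef_cast (q : ℝ) (m k : ℕ) :
    qBinomCoef (q : ℂ) (m + k) k = ((R q (m + k) / (R q k * R q m) : ℝ) : ℂ) := by
  simp [qBinomCoef, qFact_cast, Nat.add_sub_cancel]

lemma coef_zero {q : ℝ} (hq0 : 0 < q) (hq1 : q < 1) (m : ℕ) :
    qBinomCoef (q : ℂ) m 0 = 1 := by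
  have h := qFact_ne_zero hq0 hq1 m
  unfold qBinomCoef
  rw [Nat.sub_zero, show qFact (q:ℂ) 0 = 1 from Finset.prod_range_zero _]
  field_simp

lemma coef_norm_le {q : ℝ} (hq0 : 0 < q) (hq1 : q < 1) (m k : ℕ) :
    ‖qBinomCoef (q : ℂ) (m + k) k‖ ≤ 1 / R q m := by
  rw [coef_cast, Complex.norm_real, Real.norm_eq_abs]
  have hk := R_pos hq0 hq1 k
  have hm := R_pos hq0 hq1 m
  have hmk := R_pos hq0 hq1 (m + k)
  have habs : |R q (m + k) / (R q k * R q m)| = R q (m + k) / (R q k * R q m) :=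
    abs_of_pos (div_pos hmk (mul_pos hk hm))
  rw [habs]
  have hle : R q (m + k) ≤ R q k := R_anti hq0 hq1 (Nat.le_add_left k m)
  calc R q (m + k) / (R q k * R q m) ≤ R q k / (R q k * R q m) := by
        gcongr
    _ = 1 / R q m := by field_simp

lemma summable_coef {q : ℝ} (hq0 : 0 < q) (hq1 : q < 1) (z : ℂ) (hz : ‖z‖ < 1) (m : ℕ) :
    Summable (fun k : ℕ => qBinomCoef (q : ℂ) (m + k) k * z ^ k) := by
  apply Summable.of_norm
  have hgeo : Summable (fun k : ℕ => (1 / R q m) * ‖z‖ ^ k) :=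
    (summable_geometric_of_lt_one (norm_nonneg z) hz).mul_left _
  apply Summable.of_nonneg_of_le (fun k => norm_nonneg _) _ hgeo
  intro k
  rw [norm_mul, norm_pow]
  exact mul_le_mul_of_nonneg_right (coef_norm_le hq0 hq1 m k)
    (pow_nonneg (norm_nonneg z) k) |>.trans_eq rfl

lemma pascal {q : ℝ} (hq0 : 0 < q) (hq1 : q < 1) (m k : ℕ) :
    qBinomCoef (q : ℂ) (m + 1 + (k + 1)) (k + 1) =
      qBinomCoef (q : ℂ) (m + (k + 1)) (k + 1) +
        (q : ℂ) ^ (m + 1) * qBinomCoef (q : ℂ) (m + 1 + k) k := by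
  have h0 := qFact_ne_zero hq0 hq1
  unfold qBinomCoef
  rw [show m + 1 + (k + 1) - (k + 1) = m + 1 by omega,
      show m + (k + 1) - (k + 1) = m by omega,
      show m + 1 + k - k = m + 1 by omega,
      show m + 1 + (k + 1) = (m + 1 + k) + 1 by ring,
      show m + (k + 1) = m + 1 + k by ring]
  rw [qFact_succ (q:ℂ) (m + 1 + k), qFact_succ (q:ℂ) k, qFact_succ (q:ℂ) m]
  have hk1 : (1 - (q:ℂ) ^ (k + 1)) ≠ 0 := by
    have : ((1 - q ^ (k + 1) : ℝ) : ℂ) ≠ 0 := by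
      exact_mod_cast (sub_pos.2 (pow_lt_one₀ hq0.le hq1 (Nat.succ_ne_zero k))).ne'
    push_cast at this; exact this
  have hm1 : (1 - (q:ℂ) ^ (m + 1)) ≠ 0 := by
    have : ((1 - q ^ (m + 1) : ℝ) : ℂ) ≠ 0 := by
      exact_mod_cast (sub_pos.2 (pow_lt_one₀ hq0.le hq1 (Nat.succ_ne_zero m))).ne'
    push_cast at this; exact this
  have h1 := h0 k
  have h2 := h0 m
  have h3 := h0 (m + 1 + k)
  field_simp
  ring

lemma key {q : ℝ} (hq0 : 0 < q) (hq1 : q < 1) (z : ℂ) (hz : ‖z‖ < 1) (m : ℕ) :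
    (∑' k : ℕ, qBinomCoef (q:ℂ) (m + 1 + k) k * z ^ k) * (1 - z * (q:ℂ) ^ (m + 1)) =
    ∑' k : ℕ, qBinomCoef (q:ℂ) (m + k) k * z ^ k := by
  set f : ℕ → ℂ := fun k => qBinomCoef (q:ℂ) (m + 1 + k) k * z ^ k with hfdef
  set g : ℕ → ℂ := fun k => qBinomCoef (q:ℂ) (m + k) k * z ^ k with hgdef
  have hf : Summable f := summable_coef hq0 hq1 z hz (m + 1)
  have hg : Summable g := summable_coef hq0 hq1 z hz m
  have hf' : Summable (fun k => f (k + 1)) := (summable_nat_add_iff 1).mpr hf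
  set w : ℂ := z * (q:ℂ) ^ (m + 1) with hwdef
  have hfw : Summable (fun k => f k * w) := hf.mul_right w
  have e1 : (∑' k, f k) * (1 - w) = (∑' k, f k) - ∑' k, f k * w := by
    rw [tsum_mul_right]; ring
  have e2 : (∑' k, f k) = f 0 + ∑' k, f (k + 1) := Summable.tsum_eq_zero_add hf
  have e3 : (∑' k, f (k + 1)) - (∑' k, f k * w) = ∑' k, (f (k + 1) - f k * w) :=
    (Summable.tsum_sub hf' hfw).symm
  have e4 : ∀ k, f (k + 1) - f k * w = g (k + 1) := by
    intro k
    simp only [hfdef, hgdef, hwdef]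
    rw [pascal hq0 hq1 m k]
    ring
  have e5 : (∑' k, g k) = g 0 + ∑' k, g (k + 1) := Summable.tsum_eq_zero_add hg
  have hf0 : f 0 = 1 := by simp [hfdef, coef_zero hq0 hq1]
  have hg0 : g 0 = 1 := by simp [hgdef, coef_zero hq0 hq1]
  calc (∑' k, f k) * (1 - w)
      = f 0 + ((∑' k, f (k + 1)) - ∑' k, f k * w) := by rw [e1, e2]; ring
    _ = g 0 + ∑' k, g (k + 1) := by rw [e3, hf0, hg0, tsum_congr e4]
    _ = ∑' k, g k := e5.symm

theorem aux {q : ℝ} (hq0 : 0 < q) (hq1 : q < 1) (z : ℂ) (hz : ‖z‖ < 1) (m : ℕ) :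
    (∑' k : ℕ, qBinomCoef (q:ℂ) (m + k) k * z ^ k) *
      ∏ j ∈ Finset.range (m + 1), (1 - z * (q:ℂ) ^ j) = 1 := by
  induction m with
  | zero =>
    have h1 : ∀ k : ℕ, qBinomCoef (q:ℂ) (0 + k) k * z ^ k = z ^ k := by
      intro k
      have hk := qFact_ne_zero hq0 hq1 k
      unfold qBinomCoef
      rw [Nat.zero_add, Nat.sub_self, show qFact (q:ℂ) 0 = 1 from Finset.prod_range_zero _]
      field_simp
    rw [tsum_congr h1, tsum_geometric_of_norm_lt_one hz, Finset.prod_range_one]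
    have hz1 : (1 : ℂ) - z ≠ 0 := by
      intro h
      have hz2 : z = 1 := by linear_combination -h
      rw [hz2] at hz; simp at hz
    rw [pow_zero, mul_one]
    field_simp
  | succ m ih =>
    rw [Finset.prod_range_succ]
    calc (∑' k : ℕ, qBinomCoef (q:ℂ) (m + 1 + k) k * z ^ k) *
          ((∏ j ∈ Finset.range (m + 1), (1 - z * (q:ℂ) ^ j)) * (1 - z * (q:ℂ) ^ (m + 1)))
        = ((∑' k : ℕ, qBinomCoef (q:ℂ) (m + 1 + k) k * z ^ k) * (1 - z * (q:ℂ) ^ (m + 1))) *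
            ∏ j ∈ Finset.range (m + 1), (1 - z * (q:ℂ) ^ j) := by ring
      _ = (∑' k : ℕ, qBinomCoef (q:ℂ) (m + k) k * z ^ k) *
            ∏ j ∈ Finset.range (m + 1), (1 - z * (q:ℂ) ^ j) := by rw [key hq0 hq1 z hz m]
      _ = 1 := ih

end QBinAux

theorem q_binomial_generating_function (q : ℝ) (hq0 : 0 < q) (hq1 : q < 1)
    (n : ℕ) (hn : 0 < n) (z : ℂ) (hz : ‖z‖ < 1) :
    (∑' k : ℕ, qBinomCoef (q : ℂ) (n - 1 + k) k * z ^ k) *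
      ∏ j ∈ Finset.range n, (1 - z * (q : ℂ) ^ j) = 1 := by
  obtain ⟨m, rfl⟩ : ∃ m, n = m + 1 := ⟨n - 1, (Nat.succ_pred_eq_of_pos hn).symm⟩
  simp only [Nat.add_sub_cancel]
  exact QBinAux.aux hq0 hq1 z hz m
end

section
/- For 0 < q < 1 and complex z, the identity Σ_{n=0}^∞ q^{n²} z^n / ((q;q)_n (qz;q)_n) = 1/(qz;q)_∞ holds (both sides convergent for |z| < 1/q, z avoiding poles), where (qz;q)_∞ = ∏_{k=0}^∞ (1 - z q^{k+1}). -/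
/-- `(a;q)ₙ = ∏_{j=0}^{n-1} (1 - a qʲ)`. -/
def qPoch (a q : ℂ) (n : ℕ) : ℂ := ∏ j ∈ Finset.range n, (1 - a * q ^ j)

/-!
The finite identity `∑_{n ≤ N} [N n]_q q^{n²} zⁿ (zq^{n+1};q)_{N-n} = 1` follows by induction
on `N` from the q-Pascal rule `[N+1, n+1] = [N, n+1] + q^{N-n} [N, n]`, which splits the sum for
`N + 1` into `(1 - zq^{N+1})` times the sum for `N` at `z` plus `zq^{N+1}` times the sum for `N`
at `zq`.
Dividing by `(zq;q)_N` and letting `N → ∞` gives the theorem: `[N n]_q → 1/(q;q)ₙ`, and since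
`(q;q)ₙ` and `(zq;q)ₙ` converge to nonzero limits, the terms are dominated by `C q^{n²} (2|z|)ⁿ`,
so Tannery's theorem applies.
-/

open Finset Filter Topology

section Algebra

variable {a q z : ℂ} {N n : ℕ}

@[simp]
lemma qPoch_zero (a q : ℂ) : qPoch a q 0 = 1 := by simp [qPoch]

lemma qPoch_succ (a q : ℂ) (n : ℕ) : qPoch a q (n + 1) = qPoch a q n * (1 - a * q ^ n) := by
  simp [qPoch, prod_range_succ]

lemma qPoch_add (a q : ℂ) (m n : ℕ) :
    qPoch a q (m + n) = qPoch a q m * qPoch (a * q ^ m) q n := by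
  simp only [qPoch, prod_range_add, pow_add, mul_assoc]

lemma qPoch_ne_zero (ha : ∀ j, 1 - a * q ^ j ≠ 0) (n : ℕ) : qPoch a q n ≠ 0 :=
  prod_ne_zero_iff.2 fun j _ => ha j

/-- The Gaussian binomial coefficient `[N n]_q = (q^{N-n+1};q)ₙ / (q;q)ₙ`. For `n > N` the
truncated subtraction makes the factor `j = N` equal to `1 - q⁰ = 0`, so it vanishes, as it
should. -/
noncomputable def qBinom (q : ℂ) (N n : ℕ) : ℂ :=
  (∏ j ∈ range n, (1 - q ^ (N - j))) / qPoch q q n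

@[simp]
lemma qBinom_zero_right (q : ℂ) (N : ℕ) : qBinom q N 0 = 1 := by simp [qBinom]

lemma qBinom_of_lt (h : N < n) : qBinom q N n = 0 := by
  rw [qBinom, prod_eq_zero (mem_range.2 h) (by simp), zero_div]

lemma qBinom_succ_succ (h : qPoch q q (n + 1) ≠ 0) (hn : n ≤ N) :
    qBinom q (N + 1) (n + 1) = qBinom q N (n + 1) + q ^ (N - n) * qBinom q N n := by
  obtain ⟨m, rfl⟩ := Nat.exists_eq_add_of_le hn
  rw [qPoch_succ] at h
  have hnum : ∏ j ∈ range (n + 1), (1 - q ^ (n + m + 1 - j)) =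
      (∏ j ∈ range n, (1 - q ^ (n + m - j))) * (1 - q ^ (n + m + 1)) := by
    simp [prod_range_succ']
  simp only [qBinom, hnum, prod_range_succ, qPoch_succ, Nat.add_sub_cancel_left]
  field_simp [left_ne_zero_of_mul h, right_ne_zero_of_mul h]
  ring

noncomputable def cauchyTerm (q z : ℂ) (N n : ℕ) : ℂ :=
  qBinom q N n * q ^ (n ^ 2) * z ^ n * qPoch (q * z * q ^ n) q (N - n)

lemma cauchyTerm_of_lt (h : N < n) : cauchyTerm q z N n = 0 := by
  rw [cauchyTerm, qBinom_of_lt h]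
  ring

lemma cauchyTerm_succ_zero :
    cauchyTerm q z (N + 1) 0 = (1 - q * z * q ^ N) * cauchyTerm q z N 0 := by
  simp only [cauchyTerm, qBinom_zero_right, Nat.sub_zero, qPoch_succ, pow_zero]
  ring

lemma cauchyTerm_succ_succ (h : qPoch q q (n + 1) ≠ 0) (hn : n ≤ N) :
    cauchyTerm q z (N + 1) (n + 1) =
      (1 - q * z * q ^ N) * cauchyTerm q z N (n + 1) +
        q * z * q ^ N * cauchyTerm q (q * z) N n := by
  rw [cauchyTerm, qBinom_succ_succ h hn]
  obtain ⟨m, rfl⟩ := Nat.exists_eq_add_of_le hn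
  have hshift : q * (q * z) * q ^ n = q * z * q ^ (n + 1) := by ring
  cases m with
  | zero =>
    rw [cauchyTerm_of_lt (Nat.lt_succ_self _), qBinom_of_lt (Nat.lt_succ_self _)]
    simp only [cauchyTerm, Nat.add_zero, Nat.sub_self, qPoch_zero]
    ring
  | succ k =>
    simp only [cauchyTerm, hshift, Nat.add_sub_cancel_left, qPoch_succ,
      show n + (k + 1) + 1 - (n + 1) = k + 1 by omega, show n + (k + 1) - (n + 1) = k by omega]
    ring

theorem sum_cauchyTerm (hq : ∀ n, qPoch q q n ≠ 0) (z : ℂ) (N : ℕ) :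
    ∑ n ∈ range (N + 1), cauchyTerm q z N n = 1 := by
  induction N generalizing z with
  | zero => simp [cauchyTerm]
  | succ N ih =>
    have hpad := sum_range_succ' (cauchyTerm q z N) (N + 1)
    rw [sum_range_succ, ih z, cauchyTerm_of_lt (Nat.lt_succ_self N), add_zero] at hpad
    rw [sum_range_succ', cauchyTerm_succ_zero,
      sum_congr rfl fun n hn => cauchyTerm_succ_succ (hq _) (mem_range_succ_iff.1 hn),
      sum_add_distrib, ← mul_sum, ← mul_sum, ih (q * z)]
    linear_combination (q * z * q ^ N - 1) * hpad

end Algebra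

section Analysis

variable {a q : ℂ}

lemma one_sub_mul_pow_ne_zero (hq : ‖q‖ < 1) (j : ℕ) : 1 - q * q ^ j ≠ 0 := by
  rw [sub_ne_zero, ← pow_succ']
  intro h
  have := congrArg norm h
  rw [norm_one, norm_pow] at this
  exact (pow_lt_one₀ (norm_nonneg q) hq j.succ_ne_zero).ne' this

lemma summable_norm_mul_pow (a : ℂ) (hq : ‖q‖ < 1) : Summable fun j : ℕ => ‖a * q ^ j‖ := by
  simpa [norm_mul, norm_pow] using (summable_geometric_of_lt_one (norm_nonneg q) hq).mul_left ‖a‖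

lemma tendsto_qPoch (a : ℂ) (hq : ‖q‖ < 1) :
    Tendsto (qPoch a q) atTop (𝓝 (∏' j, (1 - a * q ^ j))) := by
  have h := multipliable_one_add_of_summable (f := fun j => -(a * q ^ j))
    (by simpa using summable_norm_mul_pow a hq)
  simp only [← sub_eq_add_neg] at h
  exact h.hasProd.tendsto_prod_nat

lemma tprod_one_sub_mul_pow_ne_zero (hq : ‖q‖ < 1) (ha : ∀ j, 1 - a * q ^ j ≠ 0) :
    ∏' j, (1 - a * q ^ j) ≠ 0 := by
  simpa [← sub_eq_add_neg] using
    tprod_one_add_ne_zero_of_summable (by simpa [← sub_eq_add_neg] using ha)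
      (f := fun j => -(a * q ^ j)) (by simpa using summable_norm_mul_pow a hq)

lemma exists_norm_inv_qPoch_le (hq : ‖q‖ < 1) (ha : ∀ j, 1 - a * q ^ j ≠ 0) :
    ∃ C, ∀ n, ‖(qPoch a q n)⁻¹‖ ≤ C := by
  obtain ⟨C, hC⟩ :=
    ((tendsto_qPoch a hq).inv₀ (tprod_one_sub_mul_pow_ne_zero hq ha)).norm.bddAbove_range
  exact ⟨C, fun n => hC ⟨n, rfl⟩⟩

lemma tendsto_qBinom (hq : ‖q‖ < 1) (n : ℕ) :
    Tendsto (fun N => qBinom q N n) atTop (𝓝 (qPoch q q n)⁻¹) := by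
  have h : Tendsto (fun N => ∏ j ∈ range n, (1 - q ^ (N - j))) atTop (𝓝 1) := by
    simpa using tendsto_finsetProd (range n) fun j _ =>
      (tendsto_const_nhds (x := (1 : ℂ))).sub ((tendsto_pow_atTop_nhds_zero_of_norm_lt_one hq).comp
        (tendsto_sub_atTop_nat j))
  simpa [qBinom] using h.div_const (qPoch q q n)

lemma norm_qBinom_le (hq : ‖q‖ ≤ 1) (N n : ℕ) :
    ‖qBinom q N n‖ ≤ 2 ^ n * ‖(qPoch q q n)⁻¹‖ := by
  rw [qBinom, div_eq_mul_inv, norm_mul]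
  gcongr
  calc ‖∏ j ∈ range n, (1 - q ^ (N - j))‖ ≤ ∏ j ∈ range n, ‖1 - q ^ (N - j)‖ := norm_prod_le _ _
    _ ≤ ∏ _j ∈ range n, (2 : ℝ) := by
      gcongr with j
      calc ‖1 - q ^ (N - j)‖ ≤ ‖(1 : ℂ)‖ + ‖q‖ ^ (N - j) := by
            rw [← norm_pow]; exact norm_sub_le _ _
        _ ≤ 2 := by rw [norm_one]; linarith [pow_le_one₀ (norm_nonneg q) hq (n := N - j)]
    _ = 2 ^ n := by simp

lemma summable_pow_sq_mul_pow {ρ : ℝ} (h0 : 0 ≤ ρ) (h1 : ρ < 1) (r : ℝ) :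
    Summable fun k : ℕ => ρ ^ (k ^ 2) * r ^ k := by
  have hsmall : ∀ᶠ k : ℕ in atTop, ‖ρ ^ k * r‖ ≤ 1 / 2 := by
    have h := ((tendsto_pow_atTop_nhds_zero_of_lt_one h0 h1).mul_const r).norm
    simp only [zero_mul, norm_zero] at h
    exact h.eventually (eventually_le_nhds (by norm_num))
  refine summable_geometric_two.of_norm_bounded_eventually ?_
  rw [Nat.cofinite_eq_atTop]
  filter_upwards [hsmall] with k hk
  calc ‖ρ ^ (k ^ 2) * r ^ k‖ = ‖ρ ^ k * r‖ ^ k := by rw [sq, pow_mul, ← mul_pow, norm_pow]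
    _ ≤ (1 / 2) ^ k := by gcongr

end Analysis

section Cauchy

variable {q z : ℂ}

lemma tsum_qBinom_mul_qPoch (hq : ∀ n, qPoch q q n ≠ 0) (hz : ∀ j, 1 - q * z * q ^ j ≠ 0)
    (N : ℕ) :
    (∑' k, qBinom q N k * (q ^ (k ^ 2) * z ^ k / qPoch (q * z) q k)) * qPoch (q * z) q N = 1 := by
  rw [tsum_eq_sum (s := range (N + 1)) fun k hk => by
      rw [qBinom_of_lt (by simpa using hk), zero_mul],
    sum_mul, ← sum_cauchyTerm hq z N]
  refine sum_congr rfl fun k hk => ?_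
  obtain ⟨m, rfl⟩ := Nat.exists_eq_add_of_le (mem_range_succ_iff.1 hk)
  rw [cauchyTerm, qPoch_add, Nat.add_sub_cancel_left]
  field_simp [qPoch_ne_zero hz k]

theorem tsum_pow_sq_div_qPoch_mul_qPoch (hq : ‖q‖ < 1) (hz : ∀ j, 1 - q * z * q ^ j ≠ 0) :
    ∑' n : ℕ, q ^ (n ^ 2) * z ^ n / (qPoch q q n * qPoch (q * z) q n) =
      (∏' j, (1 - q * z * q ^ j))⁻¹ := by
  have hqq : ∀ j, 1 - q * q ^ j ≠ 0 := one_sub_mul_pow_ne_zero hq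
  obtain ⟨C₁, hC₁⟩ := exists_norm_inv_qPoch_le hq hqq
  obtain ⟨C₂, hC₂⟩ := exists_norm_inv_qPoch_le hq hz
  have hlim : Tendsto (fun N => ∑' k, qBinom q N k * (q ^ (k ^ 2) * z ^ k / qPoch (q * z) q k))
      atTop (𝓝 (∑' n, q ^ (n ^ 2) * z ^ n / (qPoch q q n * qPoch (q * z) q n))) := by
    refine tendsto_tsum_of_dominated_convergence
      (bound := fun k => C₁ * C₂ * (‖q‖ ^ (k ^ 2) * (2 * ‖z‖) ^ k))
      ((summable_pow_sq_mul_pow (norm_nonneg q) hq _).mul_left _) (fun k => ?_)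
      (.of_forall fun N k => ?_)
    · convert (tendsto_qBinom hq k).mul_const (q ^ (k ^ 2) * z ^ k / qPoch (q * z) q k) using 2
      field_simp
    · have hC₁0 : 0 ≤ C₁ := (norm_nonneg _).trans (hC₁ 0)
      rw [norm_mul, div_eq_mul_inv, norm_mul, norm_mul, norm_pow, norm_pow]
      calc _ ≤ (2 ^ k * C₁) * (‖q‖ ^ (k ^ 2) * ‖z‖ ^ k * C₂) := by
            gcongr
            · exact (norm_qBinom_le hq.le N k).trans (by gcongr; exact hC₁ k)
            · exact hC₂ k
        _ = _ := by ring
  have hprod := hlim.mul (tendsto_qPoch (q * z) hq)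
  simp only [tsum_qBinom_mul_qPoch (qPoch_ne_zero hqq) hz] at hprod
  exact eq_inv_of_mul_eq_one_left (tendsto_nhds_unique hprod tendsto_const_nhds)

end Cauchy

theorem cauchy_identity_general (q : ℝ) (hq0 : 0 < q) (hq1 : q < 1) (z : ℂ)
    (hpole : ∀ k : ℕ, 1 - z * (q : ℂ) ^ (k + 1) ≠ 0) :
    ∑' n : ℕ, (q : ℂ) ^ (n ^ 2) * z ^ n /
        (qPoch (q : ℂ) (q : ℂ) n * qPoch ((q : ℂ) * z) (q : ℂ) n) =
      (∏' k : ℕ, (1 - z * (q : ℂ) ^ (k + 1)))⁻¹ := by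
  have hshift : ∀ k : ℕ, (q : ℂ) * z * (q : ℂ) ^ k = z * (q : ℂ) ^ (k + 1) := fun k => by ring
  have hq : ‖(q : ℂ)‖ < 1 := by rwa [Complex.norm_real, Real.norm_of_nonneg hq0.le]
  rw [tprod_congr fun k => by rw [← hshift]]
  exact tsum_pow_sq_div_qPoch_mul_qPoch hq fun k => hshift k ▸ hpole k

theorem cauchy_identity (q : ℝ) (hq0 : 0 < q) (hq1 : q < 1) (z : ℂ)
    (hz : ‖z‖ < 1 / q) (hpole : ∀ k : ℕ, 1 - z * (q : ℂ) ^ (k + 1) ≠ 0) :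
    ∑' n : ℕ, (q : ℂ) ^ (n ^ 2) * z ^ n /
        (qPoch (q : ℂ) (q : ℂ) n * qPoch ((q : ℂ) * z) (q : ℂ) n) =
      (∏' k : ℕ, (1 - z * (q : ℂ) ^ (k + 1)))⁻¹ :=
  cauchy_identity_general q hq0 hq1 z hpole
end
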